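/- arXiv:2310.12365 — 4 statements merged into one kernel-verified Lean document; each statement's English description precedes it below -/
import Mathlib

section
/- Let p ∈ [1,∞], let μ : ℤ → ℝ be a sequence bounded above by μ_max ∈ ℝ (μ_j ≤ μ_max for all j), let ω ∈ (π/2, π), and let λ ∈ ℂ with λ ≠ μ_max and |arg(λ − μ_max)| < ω. Then μ_j ≠ λ for all j, the diagonal operator R on ℓ^p(ℤ, ℂ) defined by (Ru)_j := (μ_j − λ)^{−1} u_j is a bounded linear operator with operator norm ‖R‖ ≤ 1/((sin ω)·|λ − μ_max|), and R satisfies μ_j (Ru)_j − λ(Ru)_j = u_j for every u ∈ ℓ^p(ℤ, ℂ) and every j ∈ ℤ. -/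
open Real
open scoped ENNReal

/-- Sector bound: for `z` in the sector `|arg z| < ω` with `π/2 < ω < π`, shifting
`z` by a nonnegative real `s` cannot decrease its modulus below `sin ω * |z|`. -/
lemma sector_shift_bound {z : ℂ} (hz : z ≠ 0) {ω : ℝ} (hω₁ : π / 2 < ω) (hω₂ : ω < π)
    (harg : |Complex.arg z| < ω) {s : ℝ} (hs : 0 ≤ s) :
    Real.sin ω * ‖z‖ ≤ ‖z + (s : ℂ)‖ := by
  have hsin : 0 < Real.sin ω := Real.sin_pos_of_pos_of_lt_pi (lt_trans (by positivity) hω₁) hω₂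
  have hsin1 : Real.sin ω ≤ 1 := Real.sin_le_one ω
  rcases le_or_gt 0 z.re with hre | hre
  · -- right half plane: |z + s| ≥ |z|
    have h1 : ‖z‖ ≤ ‖z + (s : ℂ)‖ := by
      rw [Complex.norm_def, Complex.norm_def]
      apply Real.sqrt_le_sqrt
      simp only [Complex.normSq_apply, Complex.add_re, Complex.add_im, Complex.ofReal_re,
        Complex.ofReal_im, add_zero]
      nlinarith
    nlinarith [norm_nonneg z]
  · -- left half plane: |arg z| > π/2, use the imaginary part
    have habs : π / 2 < |Complex.arg z| := by
      by_contra h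
      exact absurd (Complex.abs_arg_le_pi_div_two_iff.mp (not_lt.mp h)) (not_le.mpr hre)
    have hargpi : |Complex.arg z| ≤ π := Complex.abs_arg_le_pi z
    -- sin ω < sin |arg z| since cos is strictly decreasing on [0, π]
    have hmono : Real.sin ω < Real.sin |Complex.arg z| := by
      have hc := Real.strictAntiOn_cos
        (a := |Complex.arg z| - π / 2) (b := ω - π / 2)
        (Set.mem_Icc.mpr ⟨by linarith, by linarith [Real.pi_pos]⟩)
        (Set.mem_Icc.mpr ⟨by linarith, by linarith [Real.pi_pos]⟩) (by linarith)
      have e1 : Real.cos (|Complex.arg z| - π / 2) = Real.sin |Complex.arg z| := by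
        rw [Real.cos_sub, Real.cos_pi_div_two, Real.sin_pi_div_two]; ring
      have e2 : Real.cos (ω - π / 2) = Real.sin ω := by
        rw [Real.cos_sub, Real.cos_pi_div_two, Real.sin_pi_div_two]; ring
      rw [e1, e2] at hc; exact hc
    -- |z.im| = sin |arg z| * |z|
    have him : Real.sin |Complex.arg z| * ‖z‖ = |z.im| := by
      have h0 := Complex.norm_mul_sin_arg z
      rcases le_or_gt 0 (Complex.arg z) with ha | ha
      · rw [abs_of_nonneg ha, abs_of_nonneg]
        · rw [mul_comm]; exact h0
        · rw [← h0]
          exact mul_nonneg (norm_nonneg z)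
            (Real.sin_nonneg_of_nonneg_of_le_pi ha (Complex.arg_le_pi z))
      · rw [abs_of_neg ha, Real.sin_neg, abs_of_nonpos]
        · rw [mul_comm]; linarith [h0]
        · rw [← h0]
          refine mul_nonpos_of_nonneg_of_nonpos (norm_nonneg z) ?_
          exact Real.sin_nonpos_of_nonpos_of_neg_pi_le ha.le (Complex.neg_pi_lt_arg z).le
    have h2 : |z.im| ≤ ‖z + (s : ℂ)‖ := by
      have := Complex.abs_im_le_norm (z + (s : ℂ))
      simpa using this
    have h3 : Real.sin ω * ‖z‖ ≤ Real.sin |Complex.arg z| * ‖z‖ :=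
      mul_le_mul_of_nonneg_right hmono.le (norm_nonneg z)
    linarith

/-- A bounded diagonal multiplication operator on `lp (fun _ : ℤ => ℂ) p`. -/
lemma diagonal_clm (p : ℝ≥0∞) [Fact (1 ≤ p)] (c : ℤ → ℂ) (M : ℝ) (hM : 0 ≤ M)
    (hc : ∀ i : ℤ, ‖c i‖ ≤ M) :
    ∃ R : lp (fun _ : ℤ => ℂ) p →L[ℂ] lp (fun _ : ℤ => ℂ) p,
      ‖R‖ ≤ M ∧ ∀ u : lp (fun _ : ℤ => ℂ) p, ∀ j : ℤ, (R u) j = c j * u j := by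
  have hp1 : 1 ≤ p := Fact.out
  have hp0 : p ≠ 0 := by
    intro h; rw [h] at hp1; exact absurd hp1 (by simp)
  have hmem : ∀ u : lp (fun _ : ℤ => ℂ) p, Memℓp (fun i => c i * u i) p := by
    intro u
    rcases eq_or_ne p ∞ with rfl | hp'
    · apply memℓp_infty
      obtain ⟨C, hC⟩ := (lp.memℓp u).bddAbove
      refine ⟨M * C, ?_⟩
      rintro x ⟨i, rfl⟩
      calc ‖c i * u i‖ = ‖c i‖ * ‖u i‖ := norm_mul _ _
        _ ≤ M * C := mul_le_mul (hc i) (hC ⟨i, rfl⟩) (norm_nonneg _) hM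
    · have hq : 0 < p.toReal := ENNReal.toReal_pos hp0 hp'
      apply memℓp_gen
      have hsum := ((lp.memℓp u).summable hq).mul_left (M ^ p.toReal)
      refine Summable.of_nonneg_of_le (fun i => by positivity) (fun i => ?_) hsum
      calc ‖c i * u i‖ ^ p.toReal ≤ (M * ‖u i‖) ^ p.toReal := by
            apply Real.rpow_le_rpow (norm_nonneg _) _ hq.le
            rw [norm_mul]
            exact mul_le_mul_of_nonneg_right (hc i) (norm_nonneg _)
        _ = M ^ p.toReal * ‖u i‖ ^ p.toReal := Real.mul_rpow hM (norm_nonneg _)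
  let L : lp (fun _ : ℤ => ℂ) p →ₗ[ℂ] lp (fun _ : ℤ => ℂ) p :=
    { toFun := fun u => ⟨fun i => c i * u i, hmem u⟩
      map_add' := by
        intro u v
        ext i
        simp only [lp.coeFn_add, Pi.add_apply]
        change c i * (u i + v i) = c i * u i + c i * v i
        ring
      map_smul' := by
        intro a u
        ext i
        simp only [lp.coeFn_smul, Pi.smul_apply, RingHom.id_apply, smul_eq_mul]
        change c i * (a * u i) = a * (c i * u i)
        ring }
  have hLapp : ∀ u : lp (fun _ : ℤ => ℂ) p, ∀ i : ℤ, (L u) i = c i * u i := fun _ _ => rfl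
  have hbound : ∀ u : lp (fun _ : ℤ => ℂ) p, ‖L u‖ ≤ M * ‖u‖ := by
    intro u
    rcases eq_or_ne p ∞ with rfl | hp'
    · refine lp.norm_le_of_forall_le (mul_nonneg hM (norm_nonneg _)) fun i => ?_
      rw [hLapp, norm_mul]
      exact mul_le_mul (hc i) (lp.norm_apply_le_norm ENNReal.top_ne_zero u i)
        (norm_nonneg _) hM
    · have hq : 0 < p.toReal := ENNReal.toReal_pos hp0 hp'
      refine lp.norm_le_of_tsum_le hq (mul_nonneg hM (norm_nonneg _)) ?_
      have hsumu := (lp.memℓp u).summable hq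
      calc ∑' i, ‖(L u) i‖ ^ p.toReal
          ≤ ∑' i, M ^ p.toReal * ‖u i‖ ^ p.toReal := by
            refine Summable.tsum_le_tsum (fun i => ?_) ((lp.memℓp (L u)).summable hq)
              (hsumu.mul_left _)
            rw [hLapp, ← Real.mul_rpow hM (norm_nonneg _)]
            apply Real.rpow_le_rpow (norm_nonneg _) _ hq.le
            rw [norm_mul]
            exact mul_le_mul_of_nonneg_right (hc i) (norm_nonneg _)
        _ = M ^ p.toReal * ∑' i, ‖u i‖ ^ p.toReal := tsum_mul_left
        _ = M ^ p.toReal * ‖u‖ ^ p.toReal := by rw [lp.norm_rpow_eq_tsum hq]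
        _ = (M * ‖u‖) ^ p.toReal := (Real.mul_rpow hM (norm_nonneg _)).symm
  refine ⟨L.mkContinuous M hbound, L.mkContinuous_norm_le hM hbound, fun u j => hLapp u j⟩

/-- Resolvent bound for a diagonal (multiplication) operator on `ℓ^p(ℤ, ℂ)`:
for `λ` in the sector `|arg(λ − μ_max)| < ω`, `λ ≠ μ_max`, the diagonal operator
`(Ru)_j = (μ_j − λ)⁻¹ u_j` is bounded with norm at most `1/(sin ω · |λ − μ_max|)`,
uniformly in `p ∈ [1,∞]`. -/
theorem diagonal_resolvent_sectorial
    (p : ℝ≥0∞) [Fact (1 ≤ p)]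
    (μ : ℤ → ℝ) (μmax : ℝ) (hμ : ∀ j : ℤ, μ j ≤ μmax)
    (ω : ℝ) (hω₁ : π / 2 < ω) (hω₂ : ω < π)
    (lam : ℂ) (hlam : lam ≠ (μmax : ℂ))
    (harg : |Complex.arg (lam - (μmax : ℂ))| < ω) :
    (∀ j : ℤ, (μ j : ℂ) ≠ lam) ∧
    ∃ R : lp (fun _ : ℤ => ℂ) p →L[ℂ] lp (fun _ : ℤ => ℂ) p,
      ‖R‖ ≤ 1 / (Real.sin ω * ‖lam - (μmax : ℂ)‖) ∧
      (∀ u : lp (fun _ : ℤ => ℂ) p, ∀ j : ℤ, (R u) j = ((μ j : ℂ) - lam)⁻¹ * u j) ∧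
      (∀ u : lp (fun _ : ℤ => ℂ) p, ∀ j : ℤ,
        (μ j : ℂ) * (R u) j - lam * (R u) j = u j) := by
  set z : ℂ := lam - (μmax : ℂ) with hz_def
  have hz : z ≠ 0 := sub_ne_zero.mpr hlam
  have hsin : 0 < Real.sin ω := Real.sin_pos_of_pos_of_lt_pi (lt_trans (by positivity) hω₁) hω₂
  have hδ : 0 < Real.sin ω * ‖z‖ :=
    mul_pos hsin (norm_pos_iff.mpr hz)
  -- pointwise lower bound on |μ j - lam|
  have hkey : ∀ j : ℤ, Real.sin ω * ‖z‖ ≤ ‖(μ j : ℂ) - lam‖ := by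
    intro j
    have hs : (0 : ℝ) ≤ μmax - μ j := by linarith [hμ j]
    have h1 := sector_shift_bound hz hω₁ hω₂ harg hs
    have h2 : z + ((μmax - μ j : ℝ) : ℂ) = -((μ j : ℂ) - lam) := by
      rw [hz_def]; push_cast; ring
    rwa [h2, norm_neg] at h1
  have hne : ∀ j : ℤ, (μ j : ℂ) ≠ lam := by
    intro j h
    have := hkey j
    rw [h, sub_self, norm_zero] at this
    linarith
  have hne' : ∀ j : ℤ, (μ j : ℂ) - lam ≠ 0 := fun j => sub_ne_zero.mpr (hne j)
  set M : ℝ := 1 / (Real.sin ω * ‖z‖) with hM_def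
  have hM : 0 ≤ M := by positivity
  have hc : ∀ j : ℤ, ‖((μ j : ℂ) - lam)⁻¹‖ ≤ M := by
    intro j
    rw [norm_inv, hM_def, one_div]
    apply inv_anti₀ hδ
    exact hkey j
  obtain ⟨R, hRnorm, hRapp⟩ := diagonal_clm p (fun j => ((μ j : ℂ) - lam)⁻¹) M hM hc
  refine ⟨hne, R, hRnorm, hRapp, fun u j => ?_⟩
  rw [hRapp u j]
  have : (μ j : ℂ) * (((μ j : ℂ) - lam)⁻¹ * u j) - lam * (((μ j : ℂ) - lam)⁻¹ * u j)
      = ((μ j : ℂ) - lam) * ((μ j : ℂ) - lam)⁻¹ * u j := by ring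
  rw [this, mul_inv_cancel₀ (hne' j), one_mul]
end

section
/- Let p ∈ [1,∞], let μ : ℤ → ℝ be a sequence bounded above by μ_max ∈ ℝ, let h ∈ ℓ¹(ℤ, ℂ), let ω ∈ (π/2, π), and set λ₀ := μ_max + 2‖h‖_{ℓ¹}/sin(ω). Then for every λ ∈ ℂ with λ ≠ λ₀ and |arg(λ − λ₀)| < ω, there exists a bounded linear operator R on ℓ^p(ℤ, ℂ) with operator norm ‖R‖ ≤ 2/((sin ω)·|λ − λ₀|) such that for every u ∈ ℓ^p(ℤ, ℂ) and every j ∈ ℤ, μ_j (Ru)_j + (h * (Ru))_j − λ (Ru)_j = u_j; that is, R is a right inverse of the operator v ↦ (μ_j v_j + (h*v)_j − λ v_j)_j, so λ lies in the resolvent set of the multiplication-plus-convolution operator, with a resolvent bound independent of p. -/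
open Real
open scoped ENNReal

section aux

variable {p : ℝ≥0∞} [Fact (1 ≤ p)]

lemma aux_p_ne_zero : p ≠ 0 :=
  ne_of_gt (lt_of_lt_of_le zero_lt_one (Fact.out : 1 ≤ p))

lemma aux_toReal_pos (hp : p ≠ ∞) : 0 < p.toReal :=
  ENNReal.toReal_pos aux_p_ne_zero hp

lemma memℓp_comp_equiv (e : ℤ ≃ ℤ) {f : ℤ → ℂ} (hf : Memℓp f p) :
    Memℓp (fun j => f (e j)) p := by
  rcases p.trichotomy with (rfl | rfl | hq)
  · apply memℓp_zero
    have : {j : ℤ | f (e j) ≠ 0} = e ⁻¹' {i : ℤ | f i ≠ 0} := rfl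
    rw [this]
    exact (memℓp_zero_iff.1 hf).preimage e.injective.injOn
  · apply memℓp_infty
    obtain ⟨M, hM⟩ := memℓp_infty_iff.1 hf
    refine ⟨M, ?_⟩
    rintro x ⟨j, rfl⟩
    exact hM ⟨e j, rfl⟩
  · apply memℓp_gen
    exact (e.summable_iff (f := fun i => ‖f i‖ ^ p.toReal)).2 (hf.summable hq)

lemma lp_norm_comp_equiv_le (e : ℤ ≃ ℤ) (u F : lp (fun _ : ℤ => ℂ) p)
    (hF : ∀ j, F j = u (e j)) : ‖F‖ ≤ ‖u‖ := by
  rcases eq_or_ne p ∞ with rfl | hp'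
  · refine lp.norm_le_of_forall_le (norm_nonneg u) fun j => ?_
    rw [hF j]
    exact lp.norm_apply_le_norm (by simp) u (e j)
  · have hq := aux_toReal_pos hp'
    refine lp.norm_le_of_forall_sum_le hq (norm_nonneg u) fun s => ?_
    have : ∑ j ∈ s, ‖F j‖ ^ p.toReal = ∑ i ∈ s.map e.toEmbedding, ‖u i‖ ^ p.toReal := by
      rw [Finset.sum_map]
      exact Finset.sum_congr rfl fun j _ => by rw [hF j]; rfl
    rw [this]
    exact lp.sum_rpow_le_norm_rpow hq u _

lemma memℓp_bdd_mul {a f : ℤ → ℂ} {C : ℝ} (ha : ∀ j, ‖a j‖ ≤ C) (hf : Memℓp f p) :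
    Memℓp (fun j => a j * f j) p := by
  have hC : 0 ≤ C := le_trans (norm_nonneg _) (ha 0)
  rcases p.trichotomy with (rfl | rfl | hq)
  · apply memℓp_zero
    refine (memℓp_zero_iff.1 hf).subset fun j hj => ?_
    simp only [Set.mem_setOf_eq] at hj ⊢
    intro h0
    exact hj (by rw [h0, mul_zero])
  · apply memℓp_infty
    obtain ⟨M, hM⟩ := memℓp_infty_iff.1 hf
    refine ⟨C * M, ?_⟩
    rintro x ⟨j, rfl⟩
    calc ‖a j * f j‖ = ‖a j‖ * ‖f j‖ := norm_mul _ _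
      _ ≤ C * M := by
          have := hM ⟨j, rfl⟩
          exact mul_le_mul (ha j) this (norm_nonneg _) hC
  · apply memℓp_gen
    refine Summable.of_nonneg_of_le (fun j => Real.rpow_nonneg (norm_nonneg _) _)
      (fun j => ?_) ((hf.summable hq).mul_left (C ^ p.toReal))
    calc ‖a j * f j‖ ^ p.toReal ≤ (C * ‖f j‖) ^ p.toReal := by
          apply Real.rpow_le_rpow (norm_nonneg _) _ hq.le
          rw [norm_mul]
          exact mul_le_mul_of_nonneg_right (ha j) (norm_nonneg _)
      _ = C ^ p.toReal * ‖f j‖ ^ p.toReal := Real.mul_rpow hC (norm_nonneg _)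

lemma lp_norm_bdd_mul_le {a : ℤ → ℂ} {C : ℝ} (hC : 0 ≤ C) (ha : ∀ j, ‖a j‖ ≤ C)
    (u F : lp (fun _ : ℤ => ℂ) p) (hF : ∀ j, F j = a j * u j) : ‖F‖ ≤ C * ‖u‖ := by
  rcases eq_or_ne p ∞ with rfl | hp'
  · refine lp.norm_le_of_forall_le (mul_nonneg hC (norm_nonneg u)) fun j => ?_
    rw [hF j, norm_mul]
    exact mul_le_mul (ha j) (lp.norm_apply_le_norm (by simp) u j) (norm_nonneg _) hC
  · have hq := aux_toReal_pos hp'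
    refine lp.norm_le_of_forall_sum_le hq (mul_nonneg hC (norm_nonneg u)) fun s => ?_
    calc ∑ j ∈ s, ‖F j‖ ^ p.toReal
        ≤ ∑ j ∈ s, C ^ p.toReal * ‖u j‖ ^ p.toReal := by
          refine Finset.sum_le_sum fun j _ => ?_
          rw [hF j]
          calc ‖a j * u j‖ ^ p.toReal ≤ (C * ‖u j‖) ^ p.toReal := by
                apply Real.rpow_le_rpow (norm_nonneg _) _ hq.le
                rw [norm_mul]
                exact mul_le_mul_of_nonneg_right (ha j) (norm_nonneg _)
            _ = C ^ p.toReal * ‖u j‖ ^ p.toReal := Real.mul_rpow hC (norm_nonneg _)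
      _ = C ^ p.toReal * ∑ j ∈ s, ‖u j‖ ^ p.toReal := by rw [Finset.mul_sum]
      _ ≤ C ^ p.toReal * ‖u‖ ^ p.toReal :=
          mul_le_mul_of_nonneg_left (lp.sum_rpow_le_norm_rpow hq u s)
            (Real.rpow_nonneg hC _)
      _ = (C * ‖u‖) ^ p.toReal := (Real.mul_rpow hC (norm_nonneg _)).symm

/-- The shift operator `(S_k u) j = u (j - k)` on `ℓ^p(ℤ,ℂ)`. -/
noncomputable def shiftCLM (p : ℝ≥0∞) [Fact (1 ≤ p)] (k : ℤ) :
    lp (fun _ : ℤ => ℂ) p →L[ℂ] lp (fun _ : ℤ => ℂ) p :=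
  LinearMap.mkContinuous
    { toFun := fun u => ⟨fun j => u (j - k), memℓp_comp_equiv (Equiv.subRight k) (lp.memℓp u)⟩
      map_add' := fun u v => by
        apply lp.ext
        funext j
        simp [lp.coeFn_add]
        rfl
      map_smul' := fun c u => by
        apply lp.ext
        funext j
        simp [lp.coeFn_smul] }
    1 (fun u => by
      rw [one_mul]
      exact lp_norm_comp_equiv_le (Equiv.subRight k) u _ (fun j => rfl))

@[simp] lemma shiftCLM_apply (k : ℤ) (u : lp (fun _ : ℤ => ℂ) p) (j : ℤ) :
    (shiftCLM p k u) j = u (j - k) := rfl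

lemma shiftCLM_norm_le (k : ℤ) : ‖shiftCLM p k‖ ≤ 1 :=
  LinearMap.mkContinuous_norm_le _ zero_le_one _

/-- The multiplication operator by a bounded sequence `a` on `ℓ^p(ℤ,ℂ)`. -/
noncomputable def mulCLM (p : ℝ≥0∞) [Fact (1 ≤ p)] (a : ℤ → ℂ) (C : ℝ) (hC : 0 ≤ C)
    (ha : ∀ j, ‖a j‖ ≤ C) : lp (fun _ : ℤ => ℂ) p →L[ℂ] lp (fun _ : ℤ => ℂ) p :=
  LinearMap.mkContinuous
    { toFun := fun u => ⟨fun j => a j * u j, memℓp_bdd_mul ha (lp.memℓp u)⟩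
      map_add' := fun u v => by
        apply lp.ext
        funext j
        simp [lp.coeFn_add]
        exact mul_add _ _ _
      map_smul' := fun c u => by
        apply lp.ext
        funext j
        simp [lp.coeFn_smul]
        ring }
    C (fun u => lp_norm_bdd_mul_le hC ha u _ (fun j => rfl))

@[simp] lemma mulCLM_apply (a : ℤ → ℂ) (C : ℝ) (hC : 0 ≤ C) (ha : ∀ j, ‖a j‖ ≤ C)
    (u : lp (fun _ : ℤ => ℂ) p) (j : ℤ) : (mulCLM p a C hC ha u) j = a j * u j := rfl

lemma mulCLM_norm_le (a : ℤ → ℂ) (C : ℝ) (hC : 0 ≤ C) (ha : ∀ j, ‖a j‖ ≤ C) :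
    ‖mulCLM p a C hC ha‖ ≤ C :=
  LinearMap.mkContinuous_norm_le _ hC _

end aux

/-- key sector estimate -/
lemma sector_est {z : ℂ} {ω : ℝ} (hz : z ≠ 0) (hω₁ : π / 2 < ω) (hω₂ : ω < π)
    (harg : |Complex.arg z| < ω) (s : ℝ) (hs : 0 ≤ s) :
    Real.sin ω * ‖z‖ ≤ ‖z + s‖ ∧
      Real.sin ω * s ≤ ‖z + s‖ := by
  have habs : 0 < ‖z‖ := norm_pos_iff.mpr hz
  have hre : ‖z‖ * Real.cos ω ≤ z.re := by
    have h1 : Real.cos (Complex.arg z) = z.re / ‖z‖ := Complex.cos_arg hz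
    have h2 : Real.cos ω ≤ Real.cos |Complex.arg z| := by
      apply Real.cos_le_cos_of_nonneg_of_le_pi (abs_nonneg _) hω₂.le harg.le
    rw [Real.cos_abs] at h2
    have := mul_le_mul_of_nonneg_left h2 habs.le
    rw [h1] at this
    calc ‖z‖ * Real.cos ω ≤ ‖z‖ * (z.re / ‖z‖) := this
      _ = z.re := by field_simp
  have hsin : 0 < Real.sin ω := Real.sin_pos_of_pos_of_lt_pi (by linarith [Real.pi_pos]) hω₂
  have hsq : ‖z + s‖ ^ 2 = (z.re + s) ^ 2 + z.im ^ 2 := by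
    rw [Complex.sq_norm, Complex.normSq_apply]
    simp
    ring
  have hzsq : ‖z‖ ^ 2 = z.re ^ 2 + z.im ^ 2 := by
    rw [Complex.sq_norm, Complex.normSq_apply]; ring
  have hcos2 : Real.sin ω ^ 2 + Real.cos ω ^ 2 = 1 := by
    rw [add_comm]; exact Real.cos_sq_add_sin_sq ω
  have key : ∀ b : ℝ, 0 ≤ b → b ^ 2 ≤ ‖z + s‖ ^ 2 → b ≤ ‖z + s‖ :=
    fun b hb hsq2 => (pow_le_pow_iff_left₀ hb (norm_nonneg _) two_ne_zero).1 hsq2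
  have h2s : 2 * s * (‖z‖ * Real.cos ω) ≤ 2 * s * z.re :=
    mul_le_mul_of_nonneg_left hre (by linarith)
  constructor
  · refine key _ (mul_nonneg hsin.le (norm_nonneg _)) ?_
    nlinarith [sq_nonneg (‖z‖ * Real.cos ω + s)]
  · refine key _ (mul_nonneg hsin.le hs) ?_
    have e2 : (Real.sin ω * s) ^ 2 = s ^ 2 - (s * Real.cos ω) ^ 2 := by
      have e1 : Real.sin ω ^ 2 = 1 - Real.cos ω ^ 2 := by linarith
      rw [mul_pow, e1]; ring
    nlinarith [e2, sq_nonneg (‖z‖ + s * Real.cos ω)]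

section conv

variable {p : ℝ≥0∞} [Fact (1 ≤ p)]

lemma summable_norm_coeff (h : lp (fun _ : ℤ => ℂ) 1) : Summable fun k : ℤ => ‖h k‖ := by
  have := (lp.memℓp h).summable (p := 1) (by norm_num)
  simpa using this

lemma tsum_norm_coeff (h : lp (fun _ : ℤ => ℂ) 1) : ∑' k : ℤ, ‖h k‖ = ‖h‖ := by
  have := lp.norm_eq_tsum_rpow (p := 1) (by norm_num) h
  simpa using this.symm

lemma norm_smul_shift_le (h : lp (fun _ : ℤ => ℂ) 1) (k : ℤ) :
    ‖h k • shiftCLM p k‖ ≤ ‖h k‖ := by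
  refine ContinuousLinearMap.opNorm_le_bound _ (norm_nonneg _) fun u => ?_
  rw [ContinuousLinearMap.smul_apply, norm_smul]
  calc ‖h k‖ * ‖shiftCLM p k u‖ ≤ ‖h k‖ * (1 * ‖u‖) := by
        apply mul_le_mul_of_nonneg_left _ (norm_nonneg _)
        exact (shiftCLM p k).le_of_opNorm_le (shiftCLM_norm_le k) u
    _ = ‖h k‖ * ‖u‖ := by rw [one_mul]

lemma summable_smul_shift (h : lp (fun _ : ℤ => ℂ) 1) :
    Summable fun k : ℤ => h k • shiftCLM p k := by
  refine Summable.of_norm_bounded (summable_norm_coeff h) fun k => ?_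
  exact norm_smul_shift_le h k

/-- The convolution operator `u ↦ h * u` on `ℓ^p(ℤ,ℂ)`. -/
noncomputable def convCLM (p : ℝ≥0∞) [Fact (1 ≤ p)] (h : lp (fun _ : ℤ => ℂ) 1) :
    lp (fun _ : ℤ => ℂ) p →L[ℂ] lp (fun _ : ℤ => ℂ) p :=
  ∑' k : ℤ, h k • shiftCLM p k

lemma convCLM_norm_le (h : lp (fun _ : ℤ => ℂ) 1) : ‖convCLM p h‖ ≤ ‖h‖ := by
  calc ‖convCLM p h‖ ≤ ∑' k : ℤ, ‖h k • shiftCLM p k‖ := by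
        apply norm_tsum_le_tsum_norm
        refine Summable.of_nonneg_of_le (fun k => norm_nonneg _) (fun k => ?_)
          (summable_norm_coeff h)
        exact norm_smul_shift_le h k
    _ ≤ ∑' k : ℤ, ‖h k‖ := by
        refine Summable.tsum_le_tsum (fun k => ?_) ?_ (summable_norm_coeff h)
        · exact norm_smul_shift_le h k
        · refine Summable.of_nonneg_of_le (fun k => norm_nonneg _) (fun k => ?_)
            (summable_norm_coeff h)
          exact norm_smul_shift_le h k
    _ = ‖h‖ := tsum_norm_coeff h

/-- Coordinate evaluation as a continuous linear map. -/
noncomputable def evalCLM (p : ℝ≥0∞) [Fact (1 ≤ p)] (j : ℤ) :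
    lp (fun _ : ℤ => ℂ) p →L[ℂ] ℂ :=
  LinearMap.mkContinuous
    { toFun := fun u => u j
      map_add' := fun u v => by simp [lp.coeFn_add]
      map_smul' := fun c u => by simp [lp.coeFn_smul] }
    1 (fun u => by
      rw [one_mul]
      exact lp.norm_apply_le_norm aux_p_ne_zero u j)

@[simp] lemma evalCLM_apply (j : ℤ) (u : lp (fun _ : ℤ => ℂ) p) :
    evalCLM p j u = u j := rfl

lemma convCLM_apply_coeff (h : lp (fun _ : ℤ => ℂ) 1) (u : lp (fun _ : ℤ => ℂ) p) (j : ℤ) :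
    (convCLM p h u) j = ∑' i : ℤ, h (j - i) * u i := by
  have hsum := summable_smul_shift (p := p) h
  have h1 : convCLM p h u = ∑' k : ℤ, (h k • shiftCLM p k) u := by
    rw [convCLM]
    exact (ContinuousLinearMap.apply ℂ (lp (fun _ : ℤ => ℂ) p) u).map_tsum hsum
  have h2 : (convCLM p h u) j = ∑' k : ℤ, ((h k • shiftCLM p k) u) j := by
    rw [h1]
    have hsum2 : Summable fun k : ℤ => (h k • shiftCLM p k) u :=
      hsum.map (ContinuousLinearMap.apply ℂ (lp (fun _ : ℤ => ℂ) p) u)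
        (ContinuousLinearMap.apply ℂ (lp (fun _ : ℤ => ℂ) p) u).continuous
    exact (evalCLM p j).map_tsum hsum2
  rw [h2]
  have h3 : ∀ k : ℤ, ((h k • shiftCLM p k) u) j = h k * u (j - k) := by
    intro k
    simp [lp.coeFn_smul]
  simp_rw [h3]
  rw [← (Equiv.subLeft j).tsum_eq (fun i => h (j - i) * u i)]
  apply tsum_congr
  intro k
  simp

end conv

/-- Resolvent bound for a multiplication-plus-convolution operator on `ℓ^p(ℤ, ℂ)`:
with `λ₀ = μ_max + 2‖h‖₁/sin ω`, every `λ ≠ λ₀` with `|arg(λ − λ₀)| < ω` lies in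
the resolvent set, with resolvent bound `2/(sin ω · |λ − λ₀|)` independent of `p`. -/
theorem multiplication_convolution_resolvent
    (p : ℝ≥0∞) [Fact (1 ≤ p)]
    (μ : ℤ → ℝ) (μmax : ℝ) (hμ : ∀ j : ℤ, μ j ≤ μmax)
    (h : lp (fun _ : ℤ => ℂ) 1)
    (ω : ℝ) (hω₁ : π / 2 < ω) (hω₂ : ω < π)
    (lam₀ : ℝ) (hlam₀ : lam₀ = μmax + 2 * ‖h‖ / Real.sin ω)
    (lam : ℂ) (hlam : lam ≠ (lam₀ : ℂ))
    (harg : |Complex.arg (lam - (lam₀ : ℂ))| < ω) :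
    ∃ R : lp (fun _ : ℤ => ℂ) p →L[ℂ] lp (fun _ : ℤ => ℂ) p,
      ‖R‖ ≤ 2 / (Real.sin ω * ‖lam - (lam₀ : ℂ)‖) ∧
      ∀ u : lp (fun _ : ℤ => ℂ) p, ∀ j : ℤ,
        (μ j : ℂ) * (R u) j + (∑' i : ℤ, h (j - i) * (R u) i) - lam * (R u) j = u j := by
  set z : ℂ := lam - (lam₀ : ℂ) with hzdef
  have hz : z ≠ 0 := sub_ne_zero.2 hlam
  have hsin : 0 < Real.sin ω := Real.sin_pos_of_pos_of_lt_pi (by linarith [Real.pi_pos]) hω₂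
  have hd : 0 < ‖z‖ := norm_pos_iff.mpr hz
  have hC₁pos : 0 < Real.sin ω * ‖z‖ := mul_pos hsin hd
  -- key lower bounds on |μ j - λ|
  have key : ∀ j : ℤ, Real.sin ω * ‖z‖ ≤ ‖(μ j : ℂ) - lam‖ ∧
      2 * ‖h‖ ≤ ‖(μ j : ℂ) - lam‖ := by
    intro j
    set s : ℝ := lam₀ - μ j with hsdef
    have hs2 : 2 * ‖h‖ / Real.sin ω ≤ s := by
      have := hμ j
      rw [hsdef, hlam₀]
      linarith
    have hs : 0 ≤ s :=
      le_trans (div_nonneg (by positivity) hsin.le) hs2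
    have habs_eq : ‖(μ j : ℂ) - lam‖ = ‖z + (s : ℝ)‖ := by
      have : (μ j : ℂ) - lam = -(z + (s : ℂ)) := by
        rw [hzdef, hsdef]
        push_cast
        ring
      rw [this, norm_neg]
    obtain ⟨hA, hB⟩ := sector_est hz hω₁ hω₂ harg s hs
    refine ⟨by rw [habs_eq]; exact hA, ?_⟩
    rw [habs_eq]
    refine le_trans ?_ hB
    calc 2 * ‖h‖ = Real.sin ω * (2 * ‖h‖ / Real.sin ω) := by
          field_simp
      _ ≤ Real.sin ω * s := mul_le_mul_of_nonneg_left hs2 hsin.le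
  have hm_ne : ∀ j : ℤ, ((μ j : ℂ) - lam) ≠ 0 := by
    intro j
    intro h0
    have := (key j).1
    rw [h0] at this
    simp at this
    nlinarith
  -- the inverse-diagonal operator
  set a : ℤ → ℂ := fun j => ((μ j : ℂ) - lam)⁻¹ with hadef
  set C₁ : ℝ := (Real.sin ω * ‖z‖)⁻¹ with hC₁def
  have hC₁ : 0 ≤ C₁ := inv_nonneg.2 hC₁pos.le
  have ha1 : ∀ j, ‖a j‖ ≤ C₁ := by
    intro j
    rw [hadef]
    simp only [norm_inv]
    exact inv_anti₀ hC₁pos (key j).1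
  set Dinv := mulCLM p a C₁ hC₁ ha1 with hDdef
  set Hop := convCLM p h with hHdef
  set x := Dinv.comp Hop with hxdef
  have hx : ‖x‖ ≤ 1 / 2 := by
    by_cases hh0 : ‖h‖ = 0
    · have hH0 : ‖Hop‖ = 0 :=
        le_antisymm (le_trans (convCLM_norm_le h) (le_of_eq hh0)) (norm_nonneg _)
      calc ‖x‖ ≤ ‖Dinv‖ * ‖Hop‖ := ContinuousLinearMap.opNorm_comp_le _ _
        _ = 0 := by rw [hH0, mul_zero]
        _ ≤ 1 / 2 := by norm_num
    · have hhpos : 0 < ‖h‖ := lt_of_le_of_ne (norm_nonneg _) (Ne.symm hh0)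
      have ha2 : ∀ j, ‖a j‖ ≤ (2 * ‖h‖)⁻¹ := by
        intro j
        rw [hadef]
        simp only [norm_inv]
        exact inv_anti₀ (by positivity) (key j).2
      have hD2 : ‖Dinv‖ ≤ (2 * ‖h‖)⁻¹ := by
        refine ContinuousLinearMap.opNorm_le_bound _ (by positivity) fun u => ?_
        exact lp_norm_bdd_mul_le (by positivity) ha2 u _ (fun j => rfl)
      calc ‖x‖ ≤ ‖Dinv‖ * ‖Hop‖ := ContinuousLinearMap.opNorm_comp_le _ _
        _ ≤ (2 * ‖h‖)⁻¹ * ‖h‖ := by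
            apply mul_le_mul hD2 (convCLM_norm_le h) (norm_nonneg _) (by positivity)
        _ = 1 / 2 := by field_simp
  set y := -x with hydef
  have hy : ‖y‖ < 1 := by
    rw [hydef, norm_neg]
    linarith
  set t : lp (fun _ : ℤ => ℂ) p →L[ℂ] lp (fun _ : ℤ => ℂ) p := ∑' n : ℕ, y ^ n with htdef
  have htinv : (1 - y) * t = 1 := mul_neg_geom_series y hy
  have hpow : ∀ n : ℕ, ‖y ^ n‖ ≤ ‖y‖ ^ n := by
    intro n
    induction n with
    | zero => rw [pow_zero, pow_zero]; exact ContinuousLinearMap.norm_id_le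
    | succ n ih =>
        rw [pow_succ, pow_succ]
        exact le_trans (norm_mul_le _ _)
          (mul_le_mul ih le_rfl (norm_nonneg _) (pow_nonneg (norm_nonneg _) _))
  have hsumy : Summable fun n : ℕ => ‖y ^ n‖ :=
    Summable.of_nonneg_of_le (fun n => norm_nonneg _) hpow
      (summable_geometric_of_lt_one (norm_nonneg _) hy)
  have ht : ‖t‖ ≤ 2 := by
    calc ‖t‖ ≤ ∑' n : ℕ, ‖y ^ n‖ := norm_tsum_le_tsum_norm hsumy
      _ ≤ ∑' n : ℕ, ‖y‖ ^ n :=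
          Summable.tsum_le_tsum hpow hsumy (summable_geometric_of_lt_one (norm_nonneg _) hy)
      _ = (1 - ‖y‖)⁻¹ := tsum_geometric_of_lt_one (norm_nonneg _) hy
      _ ≤ 2 := by
          rw [inv_le_comm₀ (by rw [hydef, norm_neg]; linarith) (by norm_num)]
          rw [hydef, norm_neg]
          linarith
  refine ⟨t.comp Dinv, ?_, ?_⟩
  · calc ‖t.comp Dinv‖ ≤ ‖t‖ * ‖Dinv‖ := ContinuousLinearMap.opNorm_comp_le _ _
      _ ≤ 2 * C₁ := mul_le_mul ht (mulCLM_norm_le a C₁ hC₁ ha1) (norm_nonneg _) (by norm_num)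
      _ = 2 / (Real.sin ω * ‖z‖) := by rw [hC₁def, div_eq_mul_inv]
  · intro u j
    set v := (t.comp Dinv) u with hvdef
    have hv : v = t (Dinv u) := rfl
    have h5 : Dinv u = v + Dinv (Hop v) := by
      have happ := congrArg (fun T : lp (fun _ : ℤ => ℂ) p →L[ℂ] lp (fun _ : ℤ => ℂ) p =>
        T (Dinv u)) htinv
      simp only [ContinuousLinearMap.mul_apply, ContinuousLinearMap.sub_apply,
        ContinuousLinearMap.one_apply] at happ
      rw [← hv] at happ
      have : y v = -(Dinv (Hop v)) := by
        rw [hydef, hxdef]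
        simp [ContinuousLinearMap.comp_apply]
      rw [this] at happ
      rw [← happ]
      abel
    have hcoord : a j * u j = v j + a j * (Hop v) j := by
      have := congrArg (fun w : lp (fun _ : ℤ => ℂ) p => w j) h5
      simp only [lp.coeFn_add, Pi.add_apply] at this
      rw [hDdef] at this
      rw [mulCLM_apply, mulCLM_apply] at this
      exact this
    have hmul : ∀ w : ℂ, ((μ j : ℂ) - lam) * (a j * w) = w := by
      intro w
      show ((μ j : ℂ) - lam) * (((μ j : ℂ) - lam)⁻¹ * w) = w
      rw [← mul_assoc, mul_inv_cancel₀ (hm_ne j), one_mul]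
    have hstep := congrArg (fun w => ((μ j : ℂ) - lam) * w) hcoord
    simp only [mul_add, hmul] at hstep
    -- hstep : u j = ((μ j) - lam) * v j + (Hop v) j
    have hHv : (Hop v) j = ∑' i : ℤ, h (j - i) * v i := convCLM_apply_coeff h v j
    rw [hHv] at hstep
    rw [show (μ j : ℂ) * v j + (∑' i : ℤ, h (j - i) * v i) - lam * v j
        = ((μ j : ℂ) - lam) * v j + ∑' i : ℤ, h (j - i) * v i by ring]
    exact hstep.symm
end

section
/- Let d₁, d₂ > 0, let α = (α₁, α₂) ∈ ℕ², let 1 ≤ p ≤ q ≤ ∞, and let χ : ℝ² → [0,1] be a measurable function with χ(ν) = 0 whenever |ν| > 1. Then there exists a constant C > 0 such that for every measurable function λ : ℝ² → ℝ satisfying λ(ν) ≤ −d₁ν₁² − d₂ν₂⁴ for all ν = (ν₁, ν₂) with |ν| ≤ 1, every t ≥ 0, and every a ∈ L^q(ℝ²), one has ‖ν ↦ ν₁^{α₁} ν₂^{α₂} χ(ν) e^{λ(ν)t} a(ν)‖_{L^p(ℝ²)} ≤ C (1+t)^{−(α₁/2 + α₂/4 + (3/4)(1/p − 1/q))} ‖a‖_{L^q(ℝ²)}.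 -/
open Real MeasureTheory
open scoped ENNReal

lemma lem0 (c : ℝ) (hc : 0 < c) (n : ℕ) :
    ∃ M : ℝ, 0 < M ∧ ∀ v : ℝ, 0 ≤ v → v ^ n ≤ M * Real.exp (c * v) := by
  refine ⟨(n.factorial : ℝ) / c ^ n, by positivity, fun v hv => ?_⟩
  have h1 : (c * v) ^ n / (n.factorial : ℝ) ≤ Real.exp (c * v) := by
    have := Real.sum_le_exp_of_nonneg (by positivity : (0:ℝ) ≤ c * v) (n + 1)
    refine le_trans ?_ this
    exact Finset.single_le_sum (f := fun i => (c * v) ^ i / (i.factorial : ℝ))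
      (fun i _ => by positivity) (Finset.self_mem_range_succ n)
  have hcn : (0:ℝ) < c ^ n := by positivity
  have hfn : (0:ℝ) < (n.factorial : ℝ) := by positivity
  rw [mul_pow, div_le_iff₀ hfn] at h1
  calc v ^ n = (c ^ n * v ^ n) / c ^ n := by field_simp
    _ ≤ (Real.exp (c * v) * n.factorial) / c ^ n := by gcongr
    _ = (n.factorial : ℝ) / c ^ n * Real.exp (c * v) := by ring

lemma lem1 (c : ℝ) (hc : 0 < c) (n k : ℕ) (hk : 1 ≤ k) :
    ∃ K : ℝ, 0 < K ∧ ∀ t : ℝ, 0 ≤ t → ∀ y : ℝ, 0 ≤ y → y ≤ 1 →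
      y ^ n * Real.exp (-(c * y ^ k * t)) ≤
        K * (1 + t) ^ (-((n : ℝ) / k)) * Real.exp (-(c / 2 * y ^ k * t)) := by
  obtain ⟨M, hM, hMle⟩ := lem0 (c / 2) (by linarith) n
  refine ⟨Real.exp (c / 2) * max 1 M, by positivity, fun t ht y hy hy1 => ?_⟩
  have hs : (0:ℝ) < 1 + t := by linarith
  set u : ℝ := y * (1 + t) ^ ((1 : ℝ) / k) with hu
  have hu0 : 0 ≤ u := by positivity
  have hkR : (0:ℝ) < (k : ℝ) := by exact_mod_cast Nat.pos_of_ne_zero (by omega)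
  have huk : u ^ k = y ^ k * (1 + t) := by
    rw [hu, mul_pow, ← Real.rpow_natCast ((1 + t) ^ ((1:ℝ)/k)) k,
      ← Real.rpow_mul hs.le, one_div, inv_mul_cancel₀ hkR.ne', Real.rpow_one]
  have hun : u ^ n = y ^ n * (1 + t) ^ ((n : ℝ) / k) := by
    rw [hu, mul_pow, ← Real.rpow_natCast ((1 + t) ^ ((1:ℝ)/k)) n,
      ← Real.rpow_mul hs.le, one_div, inv_mul_eq_div]
  have hyk1 : y ^ k ≤ 1 := pow_le_one₀ hy hy1
  have hykt : u ^ k - 1 ≤ y ^ k * t := by nlinarith [huk]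
  have hkey : u ^ n * Real.exp (-(c / 2 * u ^ k)) ≤ max 1 M := by
    rcases le_total u 1 with h | h
    · have h1 : u ^ n ≤ 1 := pow_le_one₀ hu0 h
      have he : Real.exp (-(c / 2 * u ^ k)) ≤ 1 := by
        rw [Real.exp_le_one_iff]; nlinarith [pow_nonneg hu0 k]
      calc u ^ n * Real.exp (-(c / 2 * u ^ k)) ≤ 1 * 1 :=
            mul_le_mul h1 he (Real.exp_nonneg _) zero_le_one
        _ ≤ max 1 M := by simp
    · have h1 : u ^ n ≤ (u ^ k) ^ n := by
        rw [← pow_mul]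
        exact pow_le_pow_right₀ h (Nat.le_mul_of_pos_left n (by omega))
      have h2 := hMle (u ^ k) (pow_nonneg hu0 k)
      have h3 := mul_le_mul_of_nonneg_right (h1.trans h2)
        (Real.exp_nonneg (-(c / 2 * u ^ k)))
      rw [mul_assoc, ← Real.exp_add, add_neg_cancel, Real.exp_zero, mul_one] at h3
      exact h3.trans (le_max_right _ _)
  -- assemble
  have hyn : y ^ n = u ^ n * (1 + t) ^ (-((n:ℝ) / k)) := by
    rw [hun, mul_assoc, ← Real.rpow_add hs, add_neg_cancel, Real.rpow_zero, mul_one]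
  have hsplit : Real.exp (-(c * y ^ k * t)) =
      Real.exp (-(c / 2 * y ^ k * t)) * Real.exp (-(c / 2 * y ^ k * t)) := by
    rw [← Real.exp_add]; ring_nf
  have hexp2 : Real.exp (-(c / 2 * y ^ k * t)) ≤
      Real.exp (c / 2) * Real.exp (-(c / 2 * u ^ k)) := by
    rw [← Real.exp_add, Real.exp_le_exp]; nlinarith [hykt]
  have hmain : u ^ n * Real.exp (-(c / 2 * y ^ k * t)) ≤ Real.exp (c / 2) * max 1 M := by
    calc u ^ n * Real.exp (-(c / 2 * y ^ k * t))
        ≤ u ^ n * (Real.exp (c / 2) * Real.exp (-(c / 2 * u ^ k))) := by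
          apply mul_le_mul_of_nonneg_left hexp2 (pow_nonneg hu0 n)
      _ = Real.exp (c / 2) * (u ^ n * Real.exp (-(c / 2 * u ^ k))) := by ring
      _ ≤ Real.exp (c / 2) * max 1 M := by
          apply mul_le_mul_of_nonneg_left hkey (Real.exp_nonneg _)
  calc y ^ n * Real.exp (-(c * y ^ k * t))
      = (u ^ n * Real.exp (-(c / 2 * y ^ k * t))) *
          ((1 + t) ^ (-((n:ℝ) / k)) * Real.exp (-(c / 2 * y ^ k * t))) := by
        rw [hyn, hsplit]; ring
    _ ≤ (Real.exp (c / 2) * max 1 M) *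
          ((1 + t) ^ (-((n:ℝ) / k)) * Real.exp (-(c / 2 * y ^ k * t))) := by
        apply mul_le_mul_of_nonneg_right hmain (by positivity)
    _ = Real.exp (c / 2) * max 1 M * (1 + t) ^ (-((n:ℝ) / k)) *
          Real.exp (-(c / 2 * y ^ k * t)) := by ring

lemma lemA (c : ℝ) (hc : 0 < c) (m : ℕ) (hm : 1 ≤ m) :
    ∃ K : ℝ, 0 < K ∧ ∀ t : ℝ, 0 ≤ t →
      ∫⁻ x in Set.Icc (-1:ℝ) 1, ENNReal.ofReal (Real.exp (-(c * x ^ (2*m) * t)))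
        ≤ ENNReal.ofReal (K * (1 + t) ^ (-(1 / (2*m : ℝ)))) := by
  -- reference integral
  have hbound : ∀ y : ℝ, Real.exp (-(c * y ^ (2*m))) ≤
      Real.exp c * Real.exp (-(c * y ^ 2)) := by
    intro y
    rw [← Real.exp_add, Real.exp_le_exp]
    have h : y ^ 2 - 1 ≤ y ^ (2*m) := by
      rcases le_total (y ^ 2) 1 with h | h
      · have h0 : (0:ℝ) ≤ y ^ (2*m) := by rw [pow_mul]; positivity
        linarith
      · have : y ^ 2 ≤ (y ^ 2) ^ m := le_self_pow₀ h (by omega)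
        rw [← pow_mul] at this; linarith
    nlinarith
  have hgauss : Integrable (fun y : ℝ => Real.exp c * Real.exp (-(c * y ^ 2))) := by
    simpa [neg_mul] using (integrable_exp_neg_mul_sq hc).const_mul (Real.exp c)
  have hh : Integrable (fun y : ℝ => Real.exp (-(c * y ^ (2*m)))) := by
    refine hgauss.mono' ?_ (Filter.Eventually.of_forall fun y => ?_)
    · exact (Real.continuous_exp.comp (by continuity)).aestronglyMeasurable
    · rw [Real.norm_eq_abs, abs_of_pos (Real.exp_pos _)]; exact hbound y
  set I : ℝ := ∫ y : ℝ, Real.exp (-(c * y ^ (2*m))) with hI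
  have hInn : 0 ≤ I := integral_nonneg fun y => (Real.exp_nonneg _)
  refine ⟨Real.exp c * (I + 1), by positivity, fun t ht => ?_⟩
  have hs : (0:ℝ) < 1 + t := by linarith
  have hmR : (0:ℝ) < (2 * m : ℝ) := by positivity
  set b : ℝ := (1 + t) ^ ((1:ℝ) / (2*m)) with hb
  have hb0 : 0 < b := Real.rpow_pos_of_pos hs _
  have hbk : b ^ (2*m) = 1 + t := by
    rw [hb, ← Real.rpow_natCast ((1+t) ^ ((1:ℝ)/(2*m))) (2*m), ← Real.rpow_mul hs.le]
    push_cast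
    rw [one_div, inv_mul_cancel₀ hmR.ne', Real.rpow_one]
  -- scaled function
  have hg : Integrable (fun x : ℝ => Real.exp (-(c * x ^ (2*m) * (1 + t)))) := by
    have := hh.comp_mul_left' hb0.ne'
    refine this.congr (Filter.Eventually.of_forall fun x => ?_)
    simp only [mul_pow, hbk]; ring_nf
  have hscale : (∫ x : ℝ, Real.exp (-(c * x ^ (2*m) * (1 + t))))
      = b⁻¹ * I := by
    have := MeasureTheory.Measure.integral_comp_mul_left
      (fun y : ℝ => Real.exp (-(c * y ^ (2*m)))) b
    rw [abs_of_pos (inv_pos.mpr hb0), smul_eq_mul] at this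
    rw [← this]
    congr 1 with x
    simp only [mul_pow, hbk]; ring_nf
  -- pointwise comparison on Icc
  have hcmp : ∀ x ∈ Set.Icc (-1:ℝ) 1,
      Real.exp (-(c * x ^ (2*m) * t)) ≤
        Real.exp c * Real.exp (-(c * x ^ (2*m) * (1 + t))) := by
    intro x hx
    rw [← Real.exp_add, Real.exp_le_exp]
    have h1 : x ^ (2*m) ≤ 1 := by
      rw [pow_mul]
      exact pow_le_one₀ (by positivity) (by nlinarith [hx.1, hx.2])
    nlinarith [pow_nonneg (sq_nonneg x) m]
  -- put it together over set integrals
  have hint1 : IntegrableOn (fun x : ℝ => Real.exp (-(c * x ^ (2*m) * t)))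
      (Set.Icc (-1:ℝ) 1) := by
    exact (Real.continuous_exp.comp (by continuity)).integrableOn_Icc
  have step : (∫ x in Set.Icc (-1:ℝ) 1, Real.exp (-(c * x ^ (2*m) * t)))
      ≤ Real.exp c * (b⁻¹ * I) := by
    calc (∫ x in Set.Icc (-1:ℝ) 1, Real.exp (-(c * x ^ (2*m) * t)))
        ≤ ∫ x in Set.Icc (-1:ℝ) 1,
            Real.exp c * Real.exp (-(c * x ^ (2*m) * (1 + t))) := by
          refine setIntegral_mono_on hint1 ((hg.const_mul _).integrableOn)
            measurableSet_Icc hcmp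
      _ ≤ ∫ x : ℝ, Real.exp c * Real.exp (-(c * x ^ (2*m) * (1 + t))) := by
          refine setIntegral_le_integral (hg.const_mul _)
            (Filter.Eventually.of_forall fun x => by positivity)
      _ = Real.exp c * (b⁻¹ * I) := by
          rw [integral_const_mul, hscale]
  -- convert to lintegral
  rw [← MeasureTheory.ofReal_integral_eq_lintegral_ofReal hint1
    (Filter.Eventually.of_forall fun x => Real.exp_nonneg _)]
  apply ENNReal.ofReal_le_ofReal
  have hbinv : b⁻¹ = (1 + t) ^ (-(1 / (2*m : ℝ))) := by
    rw [hb, ← Real.rpow_neg hs.le]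
  calc (∫ x in Set.Icc (-1:ℝ) 1, Real.exp (-(c * x ^ (2*m) * t)))
      ≤ Real.exp c * (b⁻¹ * I) := step
    _ ≤ Real.exp c * (I + 1) * (1 + t) ^ (-(1 / (2*m : ℝ))) := by
        rw [hbinv]
        have h1 : (0:ℝ) < (1 + t) ^ (-(1 / (2*m : ℝ))) := Real.rpow_pos_of_pos hs _
        nlinarith [Real.exp_pos c]



lemma lemB (c₁ c₂ : ℝ) (h₁ : 0 < c₁) (h₂ : 0 < c₂) (r : ℝ≥0∞) (hr : r ≠ 0) :
    ∃ K : ℝ, 0 < K ∧ ∀ t : ℝ, 0 ≤ t →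
      eLpNorm ((Set.Icc (-1:ℝ) 1 ×ˢ Set.Icc (-1:ℝ) 1).indicator
        (fun ν : ℝ × ℝ => Real.exp (-(c₁ * ν.1 ^ 2 * t)) * Real.exp (-(c₂ * ν.2 ^ 4 * t))))
        r volume
        ≤ ENNReal.ofReal (K * (1 + t) ^ (-(3/4) * (1/r).toReal)) := by
  rcases eq_or_ne r ∞ with hrtop | hrtop
  · -- r = ∞ : bound by 1
    refine ⟨1, one_pos, fun t ht => ?_⟩
    rw [hrtop, eLpNorm_exponent_top]
    have hb : ∀ ν : ℝ × ℝ, ‖(Set.Icc (-1:ℝ) 1 ×ˢ Set.Icc (-1:ℝ) 1).indicator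
        (fun ν : ℝ × ℝ => Real.exp (-(c₁ * ν.1 ^ 2 * t)) * Real.exp (-(c₂ * ν.2 ^ 4 * t))) ν‖
        ≤ 1 := by
      intro ν
      rw [Real.norm_eq_abs]
      rw [abs_le]
      constructor
      · refine le_trans (by norm_num) (Set.indicator_nonneg (fun ν _ => by positivity) ν)
      · refine Set.indicator_le' (fun ν _ => ?_) (fun _ _ => zero_le_one) ν
        calc Real.exp (-(c₁ * ν.1 ^ 2 * t)) * Real.exp (-(c₂ * ν.2 ^ 4 * t)) ≤ 1 * 1 := by
              apply mul_le_mul ?_ ?_ (Real.exp_nonneg _) zero_le_one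
              · rw [Real.exp_le_one_iff]
                have := mul_nonneg (mul_nonneg h₁.le (sq_nonneg ν.1)) ht
                linarith
              · rw [Real.exp_le_one_iff]
                have h4 : (0:ℝ) ≤ ν.2 ^ 4 := by positivity
                have := mul_nonneg (mul_nonneg h₂.le h4) ht
                linarith
          _ = 1 := by norm_num
    refine le_trans (eLpNormEssSup_le_of_ae_bound (C := 1)
      (Filter.Eventually.of_forall hb)) ?_
    simp [hrtop, ENNReal.toReal_inv]
  · -- r finite
    have hrr : 0 < r.toReal := ENNReal.toReal_pos hr hrtop
    set rr := r.toReal with hrrdef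
    obtain ⟨K₁, hK₁, hK₁le⟩ := lemA (c₁ * rr) (by positivity) 1 le_rfl
    obtain ⟨K₂, hK₂, hK₂le⟩ := lemA (c₂ * rr) (by positivity) 2 one_le_two
    refine ⟨(K₁ * K₂) ^ (1 / rr), by positivity, fun t ht => ?_⟩
    have hs : (0:ℝ) < 1 + t := by linarith
    set g₁ : ℝ → ℝ≥0∞ := (Set.Icc (-1:ℝ) 1).indicator
      (fun x => ENNReal.ofReal (Real.exp (-(c₁ * rr * x ^ 2 * t)))) with hg₁
    set g₂ : ℝ → ℝ≥0∞ := (Set.Icc (-1:ℝ) 1).indicator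
      (fun x => ENNReal.ofReal (Real.exp (-(c₂ * rr * x ^ 4 * t)))) with hg₂
    have hpt : ∀ ν : ℝ × ℝ,
        (‖(Set.Icc (-1:ℝ) 1 ×ˢ Set.Icc (-1:ℝ) 1).indicator
          (fun ν : ℝ × ℝ => Real.exp (-(c₁ * ν.1 ^ 2 * t)) * Real.exp (-(c₂ * ν.2 ^ 4 * t))) ν‖₊
          : ℝ≥0∞) ^ rr = g₁ ν.1 * g₂ ν.2 := by
      intro ν
      by_cases hmem : ν ∈ Set.Icc (-1:ℝ) 1 ×ˢ Set.Icc (-1:ℝ) 1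
      · have hm1 : ν.1 ∈ Set.Icc (-1:ℝ) 1 := hmem.1
        have hm2 : ν.2 ∈ Set.Icc (-1:ℝ) 1 := hmem.2
        rw [Set.indicator_of_mem hmem, hg₁, hg₂, Set.indicator_of_mem hm1,
          Set.indicator_of_mem hm2]
        rw [← enorm_eq_nnnorm, Real.enorm_eq_ofReal (by positivity),
          ENNReal.ofReal_rpow_of_nonneg (by positivity) hrr.le,
          ← Real.exp_add, ← Real.exp_mul, ← ENNReal.ofReal_mul (Real.exp_nonneg _),
          ← Real.exp_add]
        congr 2
        ring
      · rw [Set.indicator_of_notMem hmem]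
        rw [Set.mem_prod, not_and_or] at hmem
        have : g₁ ν.1 * g₂ ν.2 = 0 := by
          rcases hmem with h | h
          · rw [hg₁]; simp [Set.indicator_of_notMem h]
          · rw [hg₂]; simp [Set.indicator_of_notMem h]
        rw [this]
        simp [ENNReal.zero_rpow_of_pos hrr]
    rw [eLpNorm_eq_lintegral_rpow_enorm_toReal hr hrtop]
    have hmg₁ : Measurable g₁ := by
      apply Measurable.indicator _ measurableSet_Icc
      exact (Real.measurable_exp.comp
        ((((measurable_id.pow_const 2).const_mul (c₁ * rr)).mul_const t).neg)).ennreal_ofReal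
    have hmg₂ : Measurable g₂ := by
      apply Measurable.indicator _ measurableSet_Icc
      exact (Real.measurable_exp.comp
        ((((measurable_id.pow_const 4).const_mul (c₂ * rr)).mul_const t).neg)).ennreal_ofReal
    have hlint : (∫⁻ ν : ℝ × ℝ, (‖(Set.Icc (-1:ℝ) 1 ×ˢ Set.Icc (-1:ℝ) 1).indicator
          (fun ν : ℝ × ℝ => Real.exp (-(c₁ * ν.1 ^ 2 * t)) * Real.exp (-(c₂ * ν.2 ^ 4 * t))) ν‖₊
          : ℝ≥0∞) ^ rr)
        = (∫⁻ x : ℝ, g₁ x) * ∫⁻ y : ℝ, g₂ y := by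
      simp_rw [hpt]
      rw [MeasureTheory.Measure.volume_eq_prod]
      exact MeasureTheory.lintegral_prod_mul hmg₁.aemeasurable hmg₂.aemeasurable
    simp only [enorm_eq_nnnorm, ← hrrdef]
    rw [hlint]
    have hb₁ : (∫⁻ x : ℝ, g₁ x) ≤ ENNReal.ofReal (K₁ * (1 + t) ^ (-(1/2 : ℝ))) := by
      rw [hg₁, lintegral_indicator measurableSet_Icc]
      have := hK₁le t ht
      norm_num at this ⊢
      exact this
    have hb₂ : (∫⁻ y : ℝ, g₂ y) ≤ ENNReal.ofReal (K₂ * (1 + t) ^ (-(1/4 : ℝ))) := by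
      rw [hg₂, lintegral_indicator measurableSet_Icc]
      have := hK₂le t ht
      norm_num at this ⊢
      exact this
    calc ((∫⁻ x : ℝ, g₁ x) * ∫⁻ y : ℝ, g₂ y) ^ (1 / rr)
        ≤ (ENNReal.ofReal (K₁ * (1 + t) ^ (-(1/2 : ℝ))) *
            ENNReal.ofReal (K₂ * (1 + t) ^ (-(1/4 : ℝ)))) ^ (1 / rr) := by
          exact ENNReal.rpow_le_rpow (mul_le_mul' hb₁ hb₂) (by positivity)
      _ = ENNReal.ofReal ((K₁ * K₂ * (1 + t) ^ (-(3/4 : ℝ))) ^ (1 / rr)) := by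
          rw [← ENNReal.ofReal_mul (by positivity),
            ENNReal.ofReal_rpow_of_nonneg (by positivity) (by positivity)]
          congr 2
          rw [show (K₁ * (1+t) ^ (-(1/2:ℝ))) * (K₂ * (1+t) ^ (-(1/4:ℝ)))
              = K₁ * K₂ * ((1+t) ^ (-(1/2:ℝ)) * (1+t) ^ (-(1/4:ℝ))) by ring,
            ← Real.rpow_add hs]
          norm_num
      _ = ENNReal.ofReal ((K₁ * K₂) ^ (1 / rr) * (1 + t) ^ (-(3/4) * (1/r).toReal)) := by
          congr 1
          rw [Real.mul_rpow (by positivity) (by positivity), ← Real.rpow_mul hs.le]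
          simp only [one_div, ENNReal.toReal_inv, ← hrrdef]





/-- `L^q → L^p` decay estimate for the cut-off semigroup kernel
`ν ↦ ν₁^{α₁} ν₂^{α₂} χ(ν) e^{λ(ν)t}` where `λ(ν) ≤ −d₁ν₁² − d₂ν₂⁴` on the
support of the cut-off `χ`. -/
theorem cutoff_semigroup_estimate
    (d₁ d₂ : ℝ) (hd₁ : 0 < d₁) (hd₂ : 0 < d₂) (α₁ α₂ : ℕ)
    (p q : ℝ≥0∞) (hp : 1 ≤ p) (hpq : p ≤ q)
    (χ : ℝ × ℝ → ℝ) (hχm : Measurable χ)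
    (hχ0 : ∀ ν : ℝ × ℝ, 0 ≤ χ ν) (hχ1 : ∀ ν : ℝ × ℝ, χ ν ≤ 1)
    (hχsupp : ∀ ν : ℝ × ℝ, 1 < Real.sqrt (ν.1 ^ 2 + ν.2 ^ 2) → χ ν = 0) :
    ∃ C : ℝ, 0 < C ∧
      ∀ lam : ℝ × ℝ → ℝ, Measurable lam →
        (∀ ν : ℝ × ℝ, Real.sqrt (ν.1 ^ 2 + ν.2 ^ 2) ≤ 1 →
          lam ν ≤ -d₁ * ν.1 ^ 2 - d₂ * ν.2 ^ 4) →
        ∀ t : ℝ, 0 ≤ t → ∀ a : ℝ × ℝ → ℂ, MemLp a q (volume : Measure (ℝ × ℝ)) →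
          eLpNorm
              (fun ν : ℝ × ℝ =>
                (ν.1 ^ α₁ * ν.2 ^ α₂ * χ ν * Real.exp (lam ν * t)) • a ν)
              p (volume : Measure (ℝ × ℝ))
            ≤ ENNReal.ofReal
                (C * (1 + t) ^
                  (-(((α₁ : ℝ) / 2) + ((α₂ : ℝ) / 4)
                      + (3 / 4) * (1 / p.toReal - 1 / q.toReal))))
              * eLpNorm a q (volume : Measure (ℝ × ℝ)) := by
  have hp0 : p ≠ 0 := (zero_lt_one.trans_le hp).ne'
  set r : ℝ≥0∞ := (1/p - 1/q)⁻¹ with hrdef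
  have h1 : 1/q ≤ 1/p := by
    simp only [one_div]
    exact ENNReal.inv_le_inv.mpr hpq
  have hrinv : 1/r = 1/p - 1/q := by rw [hrdef, one_div, inv_inv]
  have hpqr : 1/p = 1/r + 1/q := by rw [hrinv, tsub_add_cancel_of_le h1]
  have hpinv_ne_top : 1/p ≠ ∞ := by
    simp only [one_div]
    exact ENNReal.inv_ne_top.mpr hp0
  have hr0 : r ≠ 0 := by
    rw [hrdef]
    exact ENNReal.inv_ne_zero.mpr (ne_top_of_le_ne_top hpinv_ne_top tsub_le_self)
  have he : (1/r).toReal = 1/p.toReal - 1/q.toReal := by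
    rw [hrinv, ENNReal.toReal_sub_of_le h1 hpinv_ne_top]
    simp [one_div, ENNReal.toReal_inv]
  obtain ⟨K₁, hK₁, hK₁le⟩ := lem1 d₁ hd₁ α₁ 2 (by norm_num)
  obtain ⟨K₂, hK₂, hK₂le⟩ := lem1 d₂ hd₂ α₂ 4 (by norm_num)
  obtain ⟨K₃, hK₃, hK₃le⟩ := lemB (d₁/2) (d₂/2) (by linarith) (by linarith) r hr0
  refine ⟨K₁ * K₂ * K₃, by positivity, fun lam hlamm hlam t ht a ha => ?_⟩
  have hs : (0:ℝ) < 1 + t := by linarith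
  set A : ℝ := (α₁ : ℝ)/2 + (α₂ : ℝ)/4 with hA
  set φ : ℝ × ℝ → ℝ :=
    fun ν => ν.1 ^ α₁ * ν.2 ^ α₂ * χ ν * Real.exp (lam ν * t) with hφ
  set F : ℝ × ℝ → ℝ := (Set.Icc (-1:ℝ) 1 ×ˢ Set.Icc (-1:ℝ) 1).indicator
    (fun ν : ℝ × ℝ => Real.exp (-(d₁/2 * ν.1 ^ 2 * t)) * Real.exp (-(d₂/2 * ν.2 ^ 4 * t)))
    with hF
  have hFnn : ∀ ν, 0 ≤ F ν := fun ν =>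
    Set.indicator_nonneg (fun ν _ => by positivity) ν
  -- pointwise bound
  have hpt : ∀ ν : ℝ × ℝ, ‖φ ν‖ ≤ (K₁ * K₂ * (1 + t) ^ (-A)) * F ν := by
    intro ν
    by_cases hball : Real.sqrt (ν.1 ^ 2 + ν.2 ^ 2) ≤ 1
    · have hsq : ν.1 ^ 2 + ν.2 ^ 2 ≤ 1 := by
        have h0 : (0:ℝ) ≤ ν.1 ^ 2 + ν.2 ^ 2 := by positivity
        nlinarith [Real.sq_sqrt h0, Real.sqrt_nonneg (ν.1 ^ 2 + ν.2 ^ 2)]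
      have h11 : |ν.1| ≤ 1 := by
        nlinarith [sq_abs ν.1, abs_nonneg ν.1, sq_nonneg ν.2]
      have h21 : |ν.2| ≤ 1 := by
        nlinarith [sq_abs ν.2, abs_nonneg ν.2, sq_nonneg ν.1]
      have hmem : ν ∈ Set.Icc (-1:ℝ) 1 ×ˢ Set.Icc (-1:ℝ) 1 := by
        constructor
        · exact ⟨neg_le_of_abs_le h11, le_of_abs_le h11⟩
        · exact ⟨neg_le_of_abs_le h21, le_of_abs_le h21⟩
      have hFval : F ν = Real.exp (-(d₁/2 * ν.1 ^ 2 * t)) *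
          Real.exp (-(d₂/2 * ν.2 ^ 4 * t)) := by
        rw [hF, Set.indicator_of_mem hmem]
      have hnorm : ‖φ ν‖ = |ν.1| ^ α₁ * |ν.2| ^ α₂ * (χ ν * Real.exp (lam ν * t)) := by
        rw [hφ, Real.norm_eq_abs]
        rw [abs_mul, abs_mul, abs_mul, abs_pow, abs_pow,
          abs_of_nonneg (hχ0 ν), abs_of_nonneg (Real.exp_nonneg _)]
        ring
      have hexp : χ ν * Real.exp (lam ν * t) ≤
          Real.exp (-(d₁ * ν.1 ^ 2 * t)) * Real.exp (-(d₂ * ν.2 ^ 4 * t)) := by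
        rw [← Real.exp_add]
        calc χ ν * Real.exp (lam ν * t) ≤ 1 * Real.exp (lam ν * t) := by
              apply mul_le_mul_of_nonneg_right (hχ1 ν) (Real.exp_nonneg _)
          _ = Real.exp (lam ν * t) := one_mul _
          _ ≤ Real.exp (-(d₁ * ν.1 ^ 2 * t) + -(d₂ * ν.2 ^ 4 * t)) := by
              rw [Real.exp_le_exp]
              have := mul_le_mul_of_nonneg_right (hlam ν hball) ht
              nlinarith [this]
      have step1 : ‖φ ν‖ ≤ (|ν.1| ^ α₁ * Real.exp (-(d₁ * |ν.1| ^ 2 * t))) *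
          (|ν.2| ^ α₂ * Real.exp (-(d₂ * |ν.2| ^ 4 * t))) := by
        rw [hnorm, sq_abs,
          show |ν.2| ^ 4 = ν.2 ^ 4 from by
            rw [← abs_pow]; exact abs_of_nonneg (by positivity)]
        calc |ν.1| ^ α₁ * |ν.2| ^ α₂ * (χ ν * Real.exp (lam ν * t))
            ≤ |ν.1| ^ α₁ * |ν.2| ^ α₂ *
              (Real.exp (-(d₁ * ν.1 ^ 2 * t)) * Real.exp (-(d₂ * ν.2 ^ 4 * t))) := by
              apply mul_le_mul_of_nonneg_left hexp (by positivity)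
          _ = _ := by ring
      have hb1 := hK₁le t ht |ν.1| (abs_nonneg _) h11
      have hb2 := hK₂le t ht |ν.2| (abs_nonneg _) h21
      calc ‖φ ν‖ ≤ (|ν.1| ^ α₁ * Real.exp (-(d₁ * |ν.1| ^ 2 * t))) *
          (|ν.2| ^ α₂ * Real.exp (-(d₂ * |ν.2| ^ 4 * t))) := step1
        _ ≤ (K₁ * (1 + t) ^ (-((α₁ : ℝ) / 2)) * Real.exp (-(d₁/2 * |ν.1| ^ 2 * t))) *
            (K₂ * (1 + t) ^ (-((α₂ : ℝ) / 4)) * Real.exp (-(d₂/2 * |ν.2| ^ 4 * t))) := by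
            apply mul_le_mul ?_ ?_ (by positivity) (by positivity)
            · convert hb1 using 4 <;> norm_num <;> rfl
            · convert hb2 using 4 <;> norm_num <;> rfl
        _ = (K₁ * K₂ * ((1 + t) ^ (-((α₁ : ℝ) / 2)) * (1 + t) ^ (-((α₂ : ℝ) / 4)))) *
            (Real.exp (-(d₁/2 * |ν.1| ^ 2 * t)) * Real.exp (-(d₂/2 * |ν.2| ^ 4 * t))) := by
            ring
        _ = (K₁ * K₂ * (1 + t) ^ (-A)) * F ν := by
            have hexps : (1 + t) ^ (-((α₁:ℝ) / 2)) * (1 + t) ^ (-((α₂:ℝ) / 4))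
                = (1 + t) ^ (-A) := by
              rw [← Real.rpow_add hs]; congr 1; rw [hA]; ring
            rw [hexps, hFval, sq_abs,
              show |ν.2| ^ 4 = ν.2 ^ 4 from by
                rw [← abs_pow]; exact abs_of_nonneg (by positivity)]
    · have hχz : χ ν = 0 := hχsupp ν (lt_of_not_ge hball)
      have : φ ν = 0 := by rw [hφ]; simp [hχz]
      rw [this, norm_zero]
      have := hFnn ν
      positivity
  have hφm : AEStronglyMeasurable φ (volume : Measure (ℝ × ℝ)) := by
    apply Measurable.aestronglyMeasurable
    exact (((measurable_fst.pow_const α₁).mul (measurable_snd.pow_const α₂)).mul hχm).mul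
      (Real.measurable_exp.comp (hlamm.mul_const t))
  have hol : eLpNorm (fun ν : ℝ × ℝ => φ ν • a ν) p volume ≤
      eLpNorm φ r volume * eLpNorm a q volume :=
    by
      haveI : ENNReal.HolderTriple r q p := ⟨by simpa only [one_div] using hpqr.symm⟩
      have h := eLpNorm_smul_le_mul_eLpNorm (𝕜 := ℝ) (E := ℂ) (p := r) (q := q) (r := p) ha.1 hφm
      exact h
  have hφr : eLpNorm φ r volume ≤
      ENNReal.ofReal ((K₁ * K₂ * K₃) * (1 + t) ^
        (-(((α₁ : ℝ) / 2) + ((α₂ : ℝ) / 4) + (3 / 4) * (1 / p.toReal - 1 / q.toReal)))) := by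
    have hc₀ : (0:ℝ) ≤ K₁ * K₂ * (1 + t) ^ (-A) := by positivity
    calc eLpNorm φ r volume
        ≤ eLpNorm (fun ν => (K₁ * K₂ * (1 + t) ^ (-A)) * F ν) r volume :=
          eLpNorm_mono_real hpt
      _ = ENNReal.ofReal (K₁ * K₂ * (1 + t) ^ (-A)) * eLpNorm F r volume := by
          rw [show (fun ν => (K₁ * K₂ * (1 + t) ^ (-A)) * F ν)
              = (K₁ * K₂ * (1 + t) ^ (-A)) • F from rfl,
            eLpNorm_const_smul, Real.enorm_eq_ofReal hc₀]
      _ ≤ ENNReal.ofReal (K₁ * K₂ * (1 + t) ^ (-A)) *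
            ENNReal.ofReal (K₃ * (1 + t) ^ (-(3/4) * (1/r).toReal)) := by
          exact mul_le_mul_right (hK₃le t ht) _
      _ = ENNReal.ofReal ((K₁ * K₂ * K₃) * (1 + t) ^
            (-(((α₁ : ℝ) / 2) + ((α₂ : ℝ) / 4)
              + (3 / 4) * (1 / p.toReal - 1 / q.toReal)))) := by
          rw [← ENNReal.ofReal_mul hc₀]
          congr 1
          rw [show K₁ * K₂ * (1 + t) ^ (-A) * (K₃ * (1 + t) ^ (-(3/4) * (1/r).toReal))
              = K₁ * K₂ * K₃ * ((1 + t) ^ (-A) * (1 + t) ^ (-(3/4) * (1/r).toReal)) by ring,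
            ← Real.rpow_add hs]
          congr 2
          rw [he, hA]
          ring
  calc eLpNorm (fun ν : ℝ × ℝ => φ ν • a ν) p volume
      ≤ eLpNorm φ r volume * eLpNorm a q volume := hol
    _ ≤ _ := mul_le_mul_left hφr _
end

section
/- Let μ : ℤ → ℝ be a sequence such that there exist μ_max ∈ ℝ, c > 0 and C₀ ≥ 0 with μ_j ≤ μ_max and |μ_j| ≥ c·j⁴ − C₀ for all j ∈ ℤ. Let h ∈ ℓ¹(ℤ, ℂ), let λ* ∈ ℂ, and let u ∈ ℓ^∞(ℤ, ℂ) be a bounded sequence satisfying the eigenvalue equation μ_j u_j + (h*u)_j = λ* u_j for all j ∈ ℤ. Then u ∈ ℓ¹(ℤ, ℂ), i.e. Σ_{j∈ℤ} |u_j| < ∞; consequently u ∈ ℓ^q(ℤ, ℂ) for every q ∈ [1,∞]. In particular, every ℓ^p-eigenvector of the multiplication-plus-convolution operator v ↦ (μ_j v_j + (h*v)_j)_j belongs to every ℓ^q, so the point spectrum of this operator on ℓ^p is independent of p ∈ [1,∞]. -/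
open Real

/-- Bootstrap of eigenvectors: if `μ_j ≤ μ_max`, `|μ_j| ≥ c j⁴ − C₀`, `h ∈ ℓ¹`,
and a bounded sequence `u` satisfies `μ_j u_j + (h*u)_j = λ* u_j` for all `j`,
then `u ∈ ℓ¹`; consequently `u ∈ ℓ^q` for every `q ∈ [1,∞]`. -/
theorem eigenvector_bootstrap
    (μ : ℤ → ℝ) (μmax c C₀ : ℝ) (hc : 0 < c) (hC₀ : 0 ≤ C₀)
    (hμ : ∀ j : ℤ, μ j ≤ μmax)
    (hμ4 : ∀ j : ℤ, c * (j : ℝ) ^ 4 - C₀ ≤ |μ j|)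
    (h : ℤ → ℂ) (hh : Summable fun j : ℤ => ‖h j‖)
    (lam : ℂ) (u : ℤ → ℂ) (M : ℝ) (hu : ∀ j : ℤ, ‖u j‖ ≤ M)
    (heig : ∀ j : ℤ, (μ j : ℂ) * u j + ∑' i : ℤ, h (j - i) * u i = lam * u j) :
    (Summable fun j : ℤ => ‖u j‖) ∧
    ∀ q : ℝ, 1 ≤ q → Summable fun j : ℤ => ‖u j‖ ^ q := by
  have hM : 0 ≤ M := le_trans (norm_nonneg (u 0)) (hu 0)
  set S : ℝ := ∑' i : ℤ, ‖h i‖ with hS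
  have hS0 : 0 ≤ S := tsum_nonneg fun _ => norm_nonneg _
  -- key pointwise bound
  have key : ∀ j : ℤ, c * (j : ℝ) ^ 4 * ‖u j‖ ≤ S * M + (C₀ + ‖lam‖) * M := by
    intro j
    have hsum : Summable fun i : ℤ => ‖h (j - i)‖ :=
      hh.comp_injective (Equiv.subLeft j).injective
    have hsum2 : Summable fun i : ℤ => ‖h (j - i) * u i‖ := by
      apply Summable.of_nonneg_of_le (fun i => norm_nonneg _) (fun i => ?_)
        (hsum.mul_right M)
      rw [norm_mul]
      exact mul_le_mul_of_nonneg_left (hu i) (norm_nonneg _)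
    have heq : ((μ j : ℂ) - lam) * u j = -∑' i : ℤ, h (j - i) * u i := by
      have := heig j
      ring_nf
      ring_nf at this
      linear_combination this
    have hb1 : ‖((μ j : ℂ) - lam) * u j‖ ≤ S * M := by
      rw [heq, norm_neg]
      calc ‖∑' i : ℤ, h (j - i) * u i‖ ≤ ∑' i : ℤ, ‖h (j - i) * u i‖ :=
            norm_tsum_le_tsum_norm hsum2
        _ ≤ ∑' i : ℤ, ‖h (j - i)‖ * M := by
            apply Summable.tsum_le_tsum (fun i => ?_) hsum2 (hsum.mul_right M)
            rw [norm_mul]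
            exact mul_le_mul_of_nonneg_left (hu i) (norm_nonneg _)
        _ = (∑' i : ℤ, ‖h (j - i)‖) * M := tsum_mul_right
        _ = S * M := by
            congr 1
            exact (Equiv.subLeft j).tsum_eq (fun i => ‖h i‖)
    have hlow : c * (j : ℝ) ^ 4 - C₀ - ‖lam‖ ≤ ‖((μ j : ℂ) - lam)‖ := by
      have h1 : |μ j| - ‖lam‖ ≤ ‖((μ j : ℂ) - lam)‖ := by
        have := norm_sub_norm_le ((μ j : ℂ)) lam
        simpa using this
      have := hμ4 j
      linarith
    have hmul : (c * (j : ℝ) ^ 4 - C₀ - ‖lam‖) * ‖u j‖ ≤ S * M := by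
      rcases le_or_gt (c * (j : ℝ) ^ 4 - C₀ - ‖lam‖) 0 with h0 | h0
      · calc (c * (j : ℝ) ^ 4 - C₀ - ‖lam‖) * ‖u j‖ ≤ 0 :=
            mul_nonpos_of_nonpos_of_nonneg h0 (norm_nonneg _)
          _ ≤ S * M := mul_nonneg hS0 hM
      · calc (c * (j : ℝ) ^ 4 - C₀ - ‖lam‖) * ‖u j‖
            ≤ ‖((μ j : ℂ) - lam)‖ * ‖u j‖ :=
              mul_le_mul_of_nonneg_right hlow (norm_nonneg _)
          _ = ‖((μ j : ℂ) - lam) * u j‖ := (norm_mul _ _).symm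
          _ ≤ S * M := hb1
    have huj : ‖u j‖ ≤ M := hu j
    nlinarith [norm_nonneg (u j), norm_nonneg lam]
  set K : ℝ := S * M + (C₀ + ‖lam‖) * M with hK
  have hK0 : 0 ≤ K := by positivity
  have hsummable : Summable fun j : ℤ => ‖u j‖ := by
    have hg : Summable fun j : ℤ => (K / c) * (1 / (j : ℝ) ^ 4) :=
      (summable_one_div_int_pow.mpr (by norm_num)).mul_left _
    apply Summable.of_norm_bounded_eventually hg
    have : {j : ℤ | ¬ ‖(‖u j‖)‖ ≤ K / c * (1 / (j : ℝ) ^ 4)} ⊆ {0} := by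
      intro j hj
      simp only [Set.mem_setOf_eq, norm_norm] at hj
      by_contra h0
      apply hj
      have hj0 : (0 : ℝ) < (j : ℝ) ^ 4 := by
        have : (j : ℝ) ≠ 0 := by exact_mod_cast fun hh => h0 (by simpa using hh)
        positivity
      rw [mul_one_div, le_div_iff₀ hj0, le_div_iff₀ hc]
      nlinarith [key j]
    exact Set.Finite.subset (Set.finite_singleton 0) this
  refine ⟨hsummable, fun q hq => ?_⟩
  set B : ℝ := max 1 M with hB
  have hB1 : (1 : ℝ) ≤ B := le_max_left _ _
  apply Summable.of_nonneg_of_le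
    (fun j => Real.rpow_nonneg (norm_nonneg _) q)
    (fun j => ?_) (hsummable.mul_left (B ^ (q - 1)))
  rcases eq_or_lt_of_le (norm_nonneg (u j)) with h0 | h0
  · rw [← h0, Real.zero_rpow (by linarith), mul_zero]
  · have hq1 : q - 1 + 1 = q := by ring
    have hsplit := Real.rpow_add h0 (q - 1) 1
    rw [hq1, Real.rpow_one] at hsplit
    rw [hsplit]
    apply mul_le_mul_of_nonneg_right _ (norm_nonneg _)
    apply Real.rpow_le_rpow (norm_nonneg _) _ (by linarith)
    exact le_trans (hu j) (le_max_right _ _)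
end
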